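/- Let σ₁ ≥ ⋯ ≥ σ_n ≥ 0, let k ≤ n, let γ ≥ σ₁, and suppose σ_{k+1} ≤ δ·γ for some δ ∈ [0,1]. Then for every j ≤ k, the j-th elementary symmetric polynomial satisfies e_j(σ₁², …, σ_n²) ≤ γ^{2j} · ∑_{l=0}^{j} (k choose l) (n−k)^{j−l} δ^{2(j−l)}. -/

import Mathlib

/-!
Sort the indices of a `j`-subset `T` into the `l` lying among the first `k`, where `σ² ≤ γ²`,
and the `j - l` others, where `σ² ≤ (δγ)²`. A subset is determined by these two parts, so at most
`C(k, l) · C(n - k, j - l) ≤ C(k, l) · (n - k)^(j - l)` subsets have a given `l`.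
-/

open Finset

section
variable {α : Type*} [DecidableEq α]

theorem card_powersetCard_filter_card_inter_le (s S : Finset α) (j l : ℕ) :
    #{T ∈ powersetCard j s | #(T ∩ S) = l} ≤ (#(s ∩ S)).choose l * (#(s \ S)).choose (j - l) := by
  rw [← card_powersetCard, ← card_powersetCard, ← card_product]
  refine card_le_card_of_injOn (fun T => (T ∩ S, T \ S)) ?_ ?_
  · intro T hT
    simp only [coe_filter, mem_powersetCard, Set.mem_ofPred_eq] at hT
    obtain ⟨⟨hTs, hTcard⟩, hTl⟩ := hT
    have hsdiff : #(T \ S) = j - l := by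
      have := card_inter_add_card_sdiff T S
      omega
    simp only [coe_product, Set.mem_prod, mem_coe, mem_powersetCard]
    exact ⟨⟨inter_subset_inter_right hTs, hTl⟩, sdiff_subset_sdiff hTs le_rfl, hsdiff⟩
  · intro T₁ _ T₂ _ h
    simp only [Prod.mk.injEq] at h
    rw [← sup_inf_sdiff T₁ S, ← sup_inf_sdiff T₂ S]
    exact congrArg₂ (· ⊔ ·) h.1 h.2

theorem prod_le_pow_card_inter_mul_pow_card_sdiff {R : Type*} [CommSemiring R] [PartialOrder R]
    [IsOrderedRing R] {f : α → R} {S : Finset α} {a b : R} (hf : ∀ t, 0 ≤ f t)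
    (ha : ∀ t ∈ S, f t ≤ a) (hb : ∀ t ∉ S, f t ≤ b) (T : Finset α) :
    ∏ t ∈ T, f t ≤ a ^ #(T ∩ S) * b ^ #(T \ S) := by
  have hinter : ∏ t ∈ T ∩ S, f t ≤ a ^ #(T ∩ S) := by
    rw [← prod_const]
    exact prod_le_prod (fun t _ => hf t) fun t ht => ha t (mem_inter.1 ht).2
  have hsdiff : ∏ t ∈ T \ S, f t ≤ b ^ #(T \ S) := by
    rw [← prod_const]
    exact prod_le_prod (fun t _ => hf t) fun t ht => hb t (mem_sdiff.1 ht).2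
  rw [← prod_inter_mul_prod_sdiff T S]
  exact mul_le_mul hinter hsdiff (prod_nonneg fun t _ => hf t)
    ((prod_nonneg fun t _ => hf t).trans hinter)

theorem sum_powersetCard_prod_le {R : Type*} [CommSemiring R] [PartialOrder R]
    [IsOrderedRing R] {f : α → R} {S : Finset α} {a b : R} (hf : ∀ t, 0 ≤ f t)
    (ha₀ : 0 ≤ a) (hb₀ : 0 ≤ b) (ha : ∀ t ∈ S, f t ≤ a) (hb : ∀ t ∉ S, f t ≤ b)
    (s : Finset α) (j : ℕ) :
    ∑ T ∈ powersetCard j s, ∏ t ∈ T, f t ≤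
      ∑ l ∈ range (j + 1),
        ((#(s ∩ S)).choose l * (#(s \ S)).choose (j - l) : ℕ) * (a ^ l * b ^ (j - l)) := by
  have hmaps : ∀ T ∈ powersetCard j s, #(T ∩ S) ∈ range (j + 1) := by
    intro T hT
    rw [mem_range, Nat.lt_succ_iff, ← (mem_powersetCard.1 hT).2]
    exact card_le_card inter_subset_left
  rw [← sum_fiberwise_of_maps_to hmaps]
  refine sum_le_sum fun l _ => ?_
  calc ∑ T ∈ powersetCard j s with #(T ∩ S) = l, ∏ t ∈ T, f t
      ≤ #{T ∈ powersetCard j s | #(T ∩ S) = l} • (a ^ l * b ^ (j - l)) := by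
        refine sum_le_card_nsmul _ _ _ fun T hT => ?_
        obtain ⟨hTj, hTl⟩ := mem_filter.1 hT
        have hsdiff : #(T \ S) = j - l := by
          have := card_inter_add_card_sdiff T S
          have := (mem_powersetCard.1 hTj).2
          omega
        rw [← hsdiff, ← hTl]
        exact prod_le_pow_card_inter_mul_pow_card_sdiff hf ha hb T
    _ ≤ _ := by
        rw [nsmul_eq_mul]
        gcongr
        exact_mod_cast card_powersetCard_filter_card_inter_le s S j l

end

theorem stmt15_general (n k : ℕ) (hk : k < n) (σ : Fin n → ℝ)
    (hσanti : Antitone σ) (hσ0 : ∀ t, 0 ≤ σ t)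
    (γ δ : ℝ) (hγ : σ ⟨0, Nat.lt_of_le_of_lt (Nat.zero_le k) hk⟩ ≤ γ)
    (hdrop : σ ⟨k, hk⟩ ≤ δ * γ) :
    ∀ j ≤ k,
      ∑ T ∈ (Finset.univ : Finset (Fin n)).powersetCard j, ∏ t ∈ T, σ t ^ 2 ≤
        γ ^ (2 * j) *
          ∑ l ∈ Finset.range (j + 1),
            (k.choose l : ℝ) * ((n - k : ℕ) : ℝ) ^ (j - l) * δ ^ (2 * (j - l)) := by
  intro j _
  let K : Fin n := ⟨k, hk⟩
  have hhead : ∀ t ∈ Iio K, σ t ^ 2 ≤ γ ^ 2 := fun t _ =>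
    pow_le_pow_left₀ (hσ0 t) ((hσanti (Fin.mk_le_of_le_val (Nat.zero_le _))).trans hγ) 2
  have htail : ∀ t ∉ Iio K, σ t ^ 2 ≤ (δ * γ) ^ 2 := fun t ht =>
    pow_le_pow_left₀ (hσ0 t) ((hσanti (not_lt.1 (mem_Iio.not.1 ht))).trans hdrop) 2
  refine (sum_powersetCard_prod_le (fun t => sq_nonneg (σ t)) (sq_nonneg γ) (sq_nonneg _)
    hhead htail univ j).trans ?_
  rw [mul_sum]
  refine sum_le_sum fun l hl => ?_
  have hl : l ≤ j := Nat.lt_succ_iff.1 (mem_range.1 hl)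
  have hcard : #(univ ∩ Iio K) = k ∧ #(univ \ Iio K) = n - k := by
    simp [card_univ_sdiff, K]
  rw [hcard.1, hcard.2, show 2 * j = 2 * l + 2 * (j - l) by omega]
  calc ((k.choose l * (n - k).choose (j - l) : ℕ) : ℝ) * ((γ ^ 2) ^ l * ((δ * γ) ^ 2) ^ (j - l))
      ≤ ((k.choose l * (n - k) ^ (j - l) : ℕ) : ℝ) * ((γ ^ 2) ^ l * ((δ * γ) ^ 2) ^ (j - l)) := by
        gcongr
        exact Nat.choose_le_pow _ _
    _ = _ := by push_cast; ring

/-- for `σ₁ ≥ ⋯ ≥ σ_n ≥ 0` with `σ₁ ≤ γ` and `σ_{k+1} ≤ δ γ`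
(`δ ∈ [0,1]`), every `j ≤ k` satisfies
`e_j(σ₁², …, σ_n²) ≤ γ^{2j} ∑_{l=0}^{j} C(k,l) (n-k)^{j-l} δ^{2(j-l)}`. -/
theorem stmt15 (n k : ℕ) (hk : k < n) (σ : Fin n → ℝ)
    (hσanti : Antitone σ) (hσ0 : ∀ t, 0 ≤ σ t)
    (γ δ : ℝ) (hγ : σ ⟨0, Nat.lt_of_le_of_lt (Nat.zero_le k) hk⟩ ≤ γ)
    (hδ : δ ∈ Set.Icc (0 : ℝ) 1) (hdrop : σ ⟨k, hk⟩ ≤ δ * γ) :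
    ∀ j ≤ k,
      ∑ T ∈ (Finset.univ : Finset (Fin n)).powersetCard j, ∏ t ∈ T, σ t ^ 2 ≤
        γ ^ (2 * j) *
          ∑ l ∈ Finset.range (j + 1),
            (k.choose l : ℝ) * ((n - k : ℕ) : ℝ) ^ (j - l) * δ ^ (2 * (j - l)) :=
  stmt15_general n k hk σ hσanti hσ0 γ δ hγ hdrop
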